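/- Let k be an integer with 3 ≤ k ≤ 6, let C be a k-rotationally symmetric planar convex body with circumradius R, and let S be a k-subdivision of C, i.e. connected subsets C₁, …, C_k of C whose union is C and whose interiors are pairwise disjoint. Then the maximum relative diameter satisfies d_M(S) = max_{1≤i≤k} diam(C_i) ≥ R. -/

import Mathlib

open Metric Set

/-- Rotation of the plane (identified with `ℂ`) about the point `p` by angle `2π/k`. -/
noncomputable def planeRotation (k : ℕ) (p z : ℂ) : ℂ :=
  p + Complex.exp (2 * (Real.pi : ℂ) * Complex.I / (k : ℂ)) * (z - p)

/-- A `k`-rotationally symmetric planar convex body with center of symmetry `p`. -/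
def IsRotSymConvexBody (k : ℕ) (p : ℂ) (C : Set ℂ) : Prop :=
  IsCompact C ∧ Convex ℝ C ∧ (interior C).Nonempty ∧ planeRotation k p '' C = C

/-- The circumradius of a planar set. -/
noncomputable def circumradius (C : Set ℂ) : ℝ :=
  sInf {R : ℝ | ∃ c : ℂ, C ⊆ closedBall c R}

/-- A `k`-subdivision of `C`: `k` connected subsets of `C` covering `C`,
with pairwise disjoint interiors. -/
def IsSubdivision (C : Set ℂ) (k : ℕ) (P : Fin k → Set ℂ) : Prop :=
  (∀ i, P i ⊆ C) ∧ (∀ i, IsConnected (P i)) ∧ (⋃ i, P i) = C ∧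
    ∀ i j, i ≠ j → interior (P i) ∩ interior (P j) = ∅

/-!
Let `x` be a point of `C` farthest from the center `p`, at distance `r`, so that `C` lies in the
closed ball of radius `r` about `p` and `circumradius C ≤ r`. The `k` rotated copies of `x` lie in
`C`, and so does `p`, their centroid. For `k ≤ 6` two distinct `k`-th roots of unity are at
distance at least `1`, so these `k + 1` points are pairwise at distance at least `r`; by
pigeonhole two of them lie in the same piece, whose diameter is therefore at least `r`.
-/

open Real

lemma half_le_sin_of_mem_Icc {x : ℝ} (h₁ : π / 6 ≤ x) (h₂ : x ≤ 5 * π / 6) : 1 / 2 ≤ sin x := by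
  wlog hx : x ≤ π / 2 generalizing x
  · rw [← sin_pi_sub]
    exact this (by linarith) (by linarith) (by linarith)
  rw [← sin_pi_div_six]
  exact sin_le_sin_of_le_of_le_pi_div_two (by linarith [pi_pos]) hx h₁

lemma one_le_norm_exp_I_mul_ofReal_sub_one {θ : ℝ} (h₁ : π / 3 ≤ θ) (h₂ : θ ≤ 5 * π / 3) :
    1 ≤ ‖Complex.exp (Complex.I * θ) - 1‖ := by
  rw [Complex.norm_exp_I_mul_ofReal_sub_one, norm_mul, Real.norm_two, Real.norm_eq_abs]
  have := half_le_sin_of_mem_Icc (x := θ / 2) (by linarith) (by linarith)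
  linarith [le_abs_self (sin (θ / 2))]

lemma one_le_norm_sub_one_of_pow_eq_one {k : ℕ} (hk₀ : k ≠ 0) (hk : k ≤ 6) {z : ℂ}
    (hz : z ^ k = 1) (hz₁ : z ≠ 1) : 1 ≤ ‖z - 1‖ := by
  have : NeZero k := ⟨hk₀⟩
  obtain ⟨i, hik, rfl⟩ := (Complex.isPrimitiveRoot_exp k hk₀).eq_pow_of_pow_eq_one hz
  have hi : 1 ≤ i := Nat.one_le_iff_ne_zero.2 (by rintro rfl; exact hz₁ (pow_zero _))
  have hk₀' : (0 : ℝ) < k := by positivity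
  have hi' : (1 : ℝ) ≤ i := by exact_mod_cast hi
  have hik' : (i : ℝ) + 1 ≤ k := by exact_mod_cast hik
  have hk' : (k : ℝ) ≤ 6 := by exact_mod_cast hk
  rw [← Complex.exp_nat_mul,
    show (i : ℂ) * (2 * π * Complex.I / k) = Complex.I * ((2 * π * i / k : ℝ) : ℂ) by
      push_cast; ring]
  apply one_le_norm_exp_I_mul_ofReal_sub_one
  · rw [le_div_iff₀ hk₀']; nlinarith [pi_pos]
  · rw [div_le_iff₀ hk₀']; nlinarith [pi_pos]

lemma IsPrimitiveRoot.one_le_norm_pow_sub_pow {ζ : ℂ} {k : ℕ} (hζ : IsPrimitiveRoot ζ k)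
    (hk : k ≤ 6) {i j : ℕ} (hi : i < k) (hj : j < k) (hij : i ≠ j) : 1 ≤ ‖ζ ^ i - ζ ^ j‖ := by
  wlog hlt : i < j generalizing i j
  · rw [norm_sub_rev]
    exact this hj hi hij.symm (by omega)
  have hk₀ : k ≠ 0 := by omega
  have hsplit : ζ ^ i - ζ ^ j = -(ζ ^ i * (ζ ^ (j - i) - 1)) := by
    rw [mul_sub, ← pow_add, Nat.add_sub_cancel' hlt.le]; ring
  rw [hsplit, norm_neg, norm_mul, norm_pow, hζ.norm'_eq_one hk₀, one_pow, one_mul]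
  refine one_le_norm_sub_one_of_pow_eq_one hk₀ hk ?_ (hζ.pow_ne_one_of_pos_of_lt ?_ ?_)
  · rw [← pow_mul, mul_comm, pow_mul, hζ.pow_eq_one, one_pow]
  · omega
  · omega

lemma planeRotation_iterate (k : ℕ) (p z : ℂ) (j : ℕ) :
    (planeRotation k p)^[j] z = p + Complex.exp (2 * π * Complex.I / k) ^ j * (z - p) := by
  induction j with
  | zero => simp
  | succ j ih => rw [Function.iterate_succ_apply', ih, planeRotation]; ring

lemma center_mem_of_mapsTo_planeRotation {k : ℕ} (hk : 2 ≤ k) {p x : ℂ} {C : Set ℂ}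
    (hC : Convex ℝ C) (hrot : MapsTo (planeRotation k p) C C) (hx : x ∈ C) : p ∈ C := by
  have hζ := Complex.isPrimitiveRoot_exp k (by omega)
  have hk' : (k : ℝ) ≠ 0 := by positivity
  have hcentroid : ∑ j ∈ Finset.range k,
      (k : ℝ)⁻¹ • (p + Complex.exp (2 * π * Complex.I / k) ^ j * (x - p)) = p := by
    rw [← Finset.smul_sum, Finset.sum_add_distrib, ← Finset.sum_mul, hζ.geom_sum_eq_zero hk,
      zero_mul, add_zero, Finset.sum_const, Finset.card_range, ← Nat.cast_smul_eq_nsmul ℝ,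
      smul_smul, inv_mul_cancel₀ hk', one_smul]
  rw [← hcentroid]
  refine hC.sum_mem (fun _ _ => by positivity) ?_ fun j _ => ?_
  · rw [Finset.sum_const, Finset.card_range, nsmul_eq_mul, mul_inv_cancel₀ hk']
  · rw [← planeRotation_iterate]
    exact hrot.iterate j hx

def centerAndOrbit (k : ℕ) (ζ p x : ℂ) : Option (Fin k) → ℂ
  | none => p
  | some j => p + ζ ^ (j : ℕ) * (x - p)

lemma IsPrimitiveRoot.pairwise_le_dist_centerAndOrbit {ζ : ℂ} {k : ℕ}
    (hζ : IsPrimitiveRoot ζ k) (hk : k ≤ 6) (p x : ℂ) :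
    Pairwise fun a b => ‖x - p‖ ≤ dist (centerAndOrbit k ζ p x a) (centerAndOrbit k ζ p x b) := by
  have hdist (i j : ℕ) : dist (p + ζ ^ i * (x - p)) (p + ζ ^ j * (x - p)) =
      ‖ζ ^ i - ζ ^ j‖ * ‖x - p‖ := by
    rw [dist_eq_norm, ← norm_mul]; congr 1; ring
  have hcenter (j : Fin k) : dist p (p + ζ ^ (j : ℕ) * (x - p)) = ‖x - p‖ := by
    rw [dist_comm, dist_eq_norm, add_sub_cancel_left, norm_mul, norm_pow,
      hζ.norm'_eq_one j.pos.ne', one_pow, one_mul]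
  rintro (_ | i) (_ | j) hij
  · exact (hij rfl).elim
  · exact (hcenter j).ge
  · exact (dist_comm p _ ▸ hcenter i).ge
  · rw [centerAndOrbit, centerAndOrbit, hdist]
    refine le_mul_of_one_le_left (norm_nonneg _) (hζ.one_le_norm_pow_sub_pow hk i.2 j.2 ?_)
    exact Fin.val_ne_of_ne fun h => hij (congrArg some h)

lemma exists_le_diam_of_pairwise_le_dist {X ι κ : Type*} [PseudoMetricSpace X] [Fintype ι]
    [Fintype κ] (hcard : Fintype.card κ < Fintype.card ι) {S : κ → Set X}
    (hS : ∀ i, Bornology.IsBounded (S i)) {q : ι → X} (hq : ∀ a, q a ∈ ⋃ i, S i) {r : ℝ}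
    (hsep : Pairwise fun a b => r ≤ dist (q a) (q b)) : ∃ i, r ≤ diam (S i) := by
  choose f hf using fun a => mem_iUnion.1 (hq a)
  obtain ⟨a, b, hab, hfab⟩ := Fintype.exists_ne_map_eq_of_card_lt f hcard
  exact ⟨f a, (hsep hab).trans (dist_le_diam_of_mem (hS _) (hf a) (hfab ▸ hf b))⟩

lemma circumradius_le_of_subset_closedBall {C : Set ℂ} (hC : C.Nonempty) {c : ℂ} {r : ℝ}
    (h : C ⊆ closedBall c r) : circumradius C ≤ r := by
  obtain ⟨y, hy⟩ := hC
  exact csInf_le ⟨0, fun _ ⟨_, hc'⟩ => dist_nonneg.trans (mem_closedBall.1 (hc' hy))⟩ ⟨c, h⟩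

/-- For any `k`-subdivision with `3 ≤ k ≤ 6` of a `k`-rotationally symmetric planar
convex body, the maximum relative diameter is at least the circumradius. -/
theorem circumradius_le_maxRelDiam_subdivision
    (k : ℕ) (hk : 3 ≤ k) (hk' : k ≤ 6) (p : ℂ) (C : Set ℂ)
    (hC : IsRotSymConvexBody k p C)
    (S : Fin k → Set ℂ) (hS : IsSubdivision C k S) :
    circumradius C ≤ ⨆ i, Metric.diam (S i) := by
  obtain ⟨hcomp, hconv, hint, hrot⟩ := hC
  obtain ⟨hsub, -, hcover, -⟩ := hS
  obtain ⟨x, hxC, hfar⟩ := hcomp.exists_isMaxOn (hint.mono interior_subset)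
    (continuous_id.dist continuous_const).continuousOn
  have hmaps : MapsTo (planeRotation k p) C C := mapsTo_iff_image_subset.2 hrot.le
  have hmem : ∀ a, centerAndOrbit k (Complex.exp (2 * π * Complex.I / k)) p x a ∈ ⋃ i, S i
    | none => hcover ▸ center_mem_of_mapsTo_planeRotation (by omega) hconv hmaps hxC
    | some j => by
        rw [hcover, centerAndOrbit, ← planeRotation_iterate]
        exact hmaps.iterate j hxC
  obtain ⟨i, hi⟩ := exists_le_diam_of_pairwise_le_dist (by simp)
    (fun i => hcomp.isBounded.subset (hsub i)) hmem
    ((Complex.isPrimitiveRoot_exp k (by omega)).pairwise_le_dist_centerAndOrbit hk' p x)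
  calc circumradius C ≤ dist x p :=
        circumradius_le_of_subset_closedBall ⟨x, hxC⟩ fun y hy => mem_closedBall.2 (hfar hy)
    _ ≤ diam (S i) := by rwa [dist_eq_norm]
    _ ≤ ⨆ i, diam (S i) := le_ciSup (Finite.bddAbove_range fun i => diam (S i)) i
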